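/- Let p be a prime, u, m, n natural numbers with p ∤ u, m ≥ 2 if p = 2, and n ≤ 2m − ε where ε = 1 if p = 2 and ε = 0 otherwise. Set k = 1 + u·p^m. Then for all ℓ, i ≥ 0, the ℓ-th iterate of the map Ξ : ℤ/p^nℤ → ℤ/p^nℤ, Ξ(i mod p^n) = S(k,i) mod p^n, satisfies Ξ^ℓ(i mod p^n) = S(k^ℓ, i) mod p^n. -/

import Mathlib

/-- `S x i = 1 + x + ⋯ + x^(i-1)`, with `S x 0 = 0`. -/
def S (x i : ℕ) : ℕ := ∑ t ∈ Finset.range i, x ^ t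

/-!
Write `k = 1 + X` with `X = u p^m`. Modulo `p^n` we have `X² = 0` (as `n ≤ 2m`), so
`k^t ≡ 1 + tX` and `S(k, t) ≡ t + C(t,2) X`. Moreover `C(d,2) X ≡ 0` whenever `d` is divisible by
`p^n` or by `p^m`: `C(d,2) = d(d-1)/2` loses at most one factor `p`, and only for `p = 2`, which
is what the bound `n ≤ 2m - ε` pays for. Hence `S(k, a + d) ≡ S(k, a) + d` for such `d`. With
`d = p^n q` this makes `Ξ` well defined, and with `d = S(k^ℓ, i) - i` (a multiple of `p^m`,
since `k^ℓ ≡ 1 mod p^m`) it gives `Ξ(S(k^ℓ, i)) ≡ i + C(i,2) ℓX + C(i,2) X ≡ S(k^(ℓ+1), i)`.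
-/

theorem S_add (x a b : ℕ) : S x (a + b) = S x a + x ^ a * S x b := by
  simp only [S, Finset.sum_range_add, Finset.mul_sum, pow_add]

theorem S_succ (x t : ℕ) : S x (t + 1) = S x t + x ^ t := by
  simp only [S, Finset.sum_range_succ]

theorem le_S {x : ℕ} (hx : 0 < x) (t : ℕ) : t ≤ S x t :=
  calc t = ∑ _j ∈ Finset.range t, 1 := by simp
    _ ≤ S x t := Finset.sum_le_sum fun j _ => Nat.one_le_pow j x hx

theorem S_modEq_self {x q : ℕ} (hx : x ≡ 1 [MOD q]) (t : ℕ) : S x t ≡ t [MOD q] := by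
  simpa [S] using Nat.ModEq.sum fun j (_ : j ∈ Finset.range t) => hx.pow j

theorem exists_dvd_and_S_eq_add {x q : ℕ} (hx₀ : 0 < x) (hx : x ≡ 1 [MOD q]) (t : ℕ) :
    ∃ d, q ∣ d ∧ S x t = t + d :=
  ⟨_, (Nat.modEq_iff_dvd' (le_S hx₀ t)).mp (S_modEq_self hx t).symm,
    (Nat.add_sub_cancel' (le_S hx₀ t)).symm⟩

section SquareZero

variable {R : Type*} [CommRing R] {X : R}

theorem one_add_pow_of_sq_eq_zero (hX : X ^ 2 = 0) (t : ℕ) : (1 + X) ^ t = 1 + t * X := by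
  induction t with
  | zero => simp
  | succ t ih => rw [pow_succ, ih]; push_cast; linear_combination (t : R) * hX

variable {k : ℕ}

theorem natCast_S_of_sq_eq_zero (hX : X ^ 2 = 0) (hk : (k : R) = 1 + X) (t : ℕ) :
    (S k t : R) = t + t.choose 2 * X := by
  induction t with
  | zero => simp [S]
  | succ t ih =>
    rw [S_succ, Nat.cast_add, ih, Nat.cast_pow, hk, one_add_pow_of_sq_eq_zero hX,
      Nat.choose_succ_succ, Nat.choose_one_right]
    push_cast
    ring

theorem natCast_S_add_of_sq_eq_zero (hX : X ^ 2 = 0) (hk : (k : R) = 1 + X) (a : ℕ) {d : ℕ}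
    (hd : (d : R) * X = 0) (hd₂ : (d.choose 2 : R) * X = 0) :
    (S k (a + d) : R) = S k a + d := by
  rw [S_add, Nat.cast_add, Nat.cast_mul, Nat.cast_pow, hk, one_add_pow_of_sq_eq_zero hX,
    natCast_S_of_sq_eq_zero hX hk d, hd₂, add_zero]
  linear_combination (a : R) * hd

end SquareZero

theorem Nat.Prime.pow_sub_dvd_choose_two {p a c : ℕ} (hp : p.Prime) (hc : p ^ a ∣ c) :
    p ^ (a - if p = 2 then 1 else 0) ∣ c.choose 2 := by
  have htwice : c.choose 2 * 2 = c * (c - 1) := by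
    rw [Nat.choose_two_right, Nat.div_mul_cancel (Nat.even_mul_pred_self c).two_dvd]
  split_ifs with h2
  · subst h2
    rcases a with _ | a
    · simp
    obtain ⟨e, rfl⟩ := hc
    refine ⟨e * (2 ^ (a + 1) * e - 1), Nat.eq_of_mul_eq_mul_right two_pos ?_⟩
    rw [htwice, Nat.add_sub_cancel, pow_succ]
    ring
  · have hcop : Nat.Coprime (p ^ a) 2 :=
      Nat.Coprime.pow_left a ((Nat.coprime_primes hp Nat.prime_two).mpr h2)
    exact hcop.dvd_of_dvd_mul_right (htwice ▸ hc.mul_right _)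

section Iteration

variable {p u m n : ℕ}

theorem natCast_choose_two_mul_eq_zero (hp : p.Prime) {a c : ℕ} (hc : p ^ a ∣ c)
    (hn : n ≤ (a - if p = 2 then 1 else 0) + m) :
    (c.choose 2 : ZMod (p ^ n)) * ((u * p ^ m : ℕ) : ZMod (p ^ n)) = 0 := by
  rw [← Nat.cast_mul, ZMod.natCast_eq_zero_iff, mul_left_comm]
  exact (pow_dvd_pow p hn).trans
    (pow_add p _ m ▸ Dvd.dvd.mul_left (mul_dvd_mul_right (hp.pow_sub_dvd_choose_two hc) _) u)

variable (hnm : n ≤ 2 * m - if p = 2 then 1 else 0)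
include hnm

theorem sq_natCast_mul_pow_eq_zero : ((u * p ^ m : ℕ) : ZMod (p ^ n)) ^ 2 = 0 := by
  rw [← Nat.cast_pow, ZMod.natCast_eq_zero_iff, mul_pow, ← pow_mul]
  exact (pow_dvd_pow p (by split_ifs at hnm ⊢ <;> omega)).trans (dvd_mul_left _ _)

theorem natCast_S_val_natCast (hp : p.Prime) (t : ℕ) :
    (S (1 + u * p ^ m) ((t : ZMod (p ^ n)).val) : ZMod (p ^ n)) = S (1 + u * p ^ m) t := by
  have hX := sq_natCast_mul_pow_eq_zero (u := u) hnm
  have hk : ((1 + u * p ^ m : ℕ) : ZMod (p ^ n)) = 1 + ((u * p ^ m : ℕ) : ZMod (p ^ n)) := by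
    push_cast; ring
  conv_rhs => rw [← Nat.mod_add_div t (p ^ n)]
  rw [ZMod.val_natCast, natCast_S_add_of_sq_eq_zero hX hk]
  · simp
  · simp
  · exact natCast_choose_two_mul_eq_zero hp (dvd_mul_right _ _) (by split_ifs at hnm ⊢ <;> omega)

theorem natCast_S_S_pow (hp : p.Prime) (ℓ i : ℕ) :
    (S (1 + u * p ^ m) (S ((1 + u * p ^ m) ^ ℓ) i) : ZMod (p ^ n))
      = S ((1 + u * p ^ m) ^ (ℓ + 1)) i := by
  set k := 1 + u * p ^ m
  set X : ZMod (p ^ n) := ((u * p ^ m : ℕ) : ZMod (p ^ n))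
  have hX : X ^ 2 = 0 := sq_natCast_mul_pow_eq_zero hnm
  have hk : (k : ZMod (p ^ n)) = 1 + X := by simp only [k, X]; push_cast; ring
  have hkpow (j : ℕ) : ((k ^ j : ℕ) : ZMod (p ^ n)) = 1 + j * X := by
    rw [Nat.cast_pow, hk, one_add_pow_of_sq_eq_zero hX]
  have hSpow (j : ℕ) : (S (k ^ j) i : ZMod (p ^ n)) = i + i.choose 2 * (j * X) :=
    natCast_S_of_sq_eq_zero (hX := by linear_combination (j : ZMod (p ^ n)) ^ 2 * hX)
      (hkpow j) i
  have hkpow_modEq : k ^ ℓ ≡ 1 [MOD p ^ m] := by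
    have hk₁ : k ≡ 1 [MOD p ^ m] := by simp [k, Nat.ModEq]
    simpa using hk₁.pow ℓ
  obtain ⟨d, hd, hSd⟩ := exists_dvd_and_S_eq_add (by positivity) hkpow_modEq i
  have hdX : (d : ZMod (p ^ n)) = i.choose 2 * (ℓ * X) := by
    have := hSpow ℓ
    rw [hSd, Nat.cast_add] at this
    linear_combination this
  have hdX₀ : (d : ZMod (p ^ n)) * X = 0 := by
    rw [hdX]; linear_combination (i.choose 2 * ℓ : ZMod (p ^ n)) * hX
  have hd₂ : (d.choose 2 : ZMod (p ^ n)) * X = 0 :=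
    natCast_choose_two_mul_eq_zero hp hd (by split_ifs at hnm ⊢ <;> omega)
  rw [hSd, natCast_S_add_of_sq_eq_zero hX hk i hdX₀ hd₂, natCast_S_of_sq_eq_zero hX hk, hdX,
    hSpow]
  push_cast
  ring

end Iteration

theorem stmt_7_general (p u m n : ℕ) (hp : p.Prime)
    (ε : ℕ) (hε : ε = if p = 2 then 1 else 0) (hnm : n ≤ 2 * m - ε)
    (k : ℕ) (hk : k = 1 + u * p ^ m) (ℓ i : ℕ) :
    (fun z : ZMod (p ^ n) => ((S k z.val : ℕ) : ZMod (p ^ n)))^[ℓ] ((i : ℕ) : ZMod (p ^ n))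
      = ((S (k ^ ℓ) i : ℕ) : ZMod (p ^ n)) := by
  subst hε hk
  induction ℓ with
  | zero => simp [S]
  | succ ℓ ih =>
    rw [Function.iterate_succ_apply', ih, natCast_S_val_natCast hnm hp, natCast_S_S_pow hnm hp]

theorem stmt_7 (p u m n : ℕ) (hp : p.Prime) (hu : ¬ p ∣ u) (hm : 0 < m)
    (hp2 : p = 2 → 2 ≤ m) (hn : 0 < n)
    (ε : ℕ) (hε : ε = if p = 2 then 1 else 0) (hnm : n ≤ 2 * m - ε)
    (k : ℕ) (hk : k = 1 + u * p ^ m) (ℓ i : ℕ) :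
    (fun z : ZMod (p ^ n) => ((S k z.val : ℕ) : ZMod (p ^ n)))^[ℓ] ((i : ℕ) : ZMod (p ^ n))
      = ((S (k ^ ℓ) i : ℕ) : ZMod (p ^ n)) :=
  stmt_7_general p u m n hp ε hε hnm k hk ℓ i
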